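/- arXiv:2303.14051 — 5 statements merged into one kernel-verified Lean document; each statement's English description precedes it below -/
import Mathlib

section
/- In the algebra G(A,B) generated by (u_{ij})_{1≤i,j≤n}, D, D^{-1} subject to u^t A u = A D, u B u^t = B D, D D^{-1} = D^{-1} D = 1, the commutation relation B A D u = u D B A holds; equivalently D u D^{-1} = A^{-1} B^{-1} u B A (as matrices of algebra elements). -/
/-!
Writing `𝔻` for the scalar matrix of `D`, which commutes with `A` and `B` since their entries are
scalars, associativity alone gives
`B A 𝔻 u = 𝔻 B A u = (u B uᵀ) A u = u B (uᵀ A u) = u B 𝔻 A = u 𝔻 B A`.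
Conjugating by the invertible matrix `B A` then yields `𝔻 u 𝔻⁻¹ = (B A)⁻¹ u (B A)`.
-/

open Matrix

section Monoid

variable {M : Type*} [Monoid M]

theorem mul_mul_eq_of_similitude {a b d t u : M} (ha : t * a * u = d * a)
    (hb : u * b * t = d * b) (hda : Commute d a) (hdb : Commute d b) :
    b * a * (d * u) = u * (d * (b * a)) :=
  calc b * a * (d * u) = d * b * a * u := by
        rw [mul_assoc d, (hdb.mul_right hda).eq]; simp only [mul_assoc]
    _ = u * b * (t * a * u) := by rw [← hb]; simp only [mul_assoc]
    _ = u * (d * (b * a)) := by rw [ha, mul_assoc, ← mul_assoc b, ← hdb.eq, mul_assoc]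

theorem conj_eq_of_mul_mul_eq {d dinv u x y : M} (hxu : x * (d * u) = u * (d * x))
    (hdx : Commute d x) (hyx : y * x = 1) (hd : d * dinv = 1) :
    d * u * dinv = y * u * x :=
  calc d * u * dinv = y * (x * (d * u)) * dinv := by rw [← mul_assoc y, hyx, one_mul]
    _ = y * u * x := by rw [hxu, hdx.eq]; simp only [mul_assoc, hd, mul_one]

end Monoid

theorem Matrix.scalar_commute_of_forall_commute {n α : Type*} [Fintype n] [DecidableEq n]
    [Semiring α] {r : α} {M : Matrix n n α} (h : ∀ i j, Commute r (M i j)) :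
    Commute (scalar n r) M :=
  scalar_commute_iff.2 <| ext h

theorem Matrix.scalar_commute_map_algebraMap {n k R : Type*} [Fintype n] [DecidableEq n]
    [CommSemiring k] [Semiring R] [Algebra k R] (r : R) (M : Matrix n n k) :
    Commute (scalar n r) (M.map (algebraMap k R)) :=
  scalar_commute_of_forall_commute fun _ _ => Algebra.commute_algebraMap_right _ _

theorem Matrix.map_nonsing_inv_mul_map {n α β : Type*} [Fintype n] [DecidableEq n] [CommRing α]
    [Semiring β] (f : α →+* β) {A : Matrix n n α} (hA : IsUnit A) :
    A⁻¹.map f * A.map f = 1 := by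
  rw [← Matrix.map_mul, A.nonsing_inv_mul ((isUnit_iff_isUnit_det A).mp hA),
    Matrix.map_one _ f.map_zero f.map_one]

theorem stmt1_general {k : Type*} [Field k] {n : ℕ}
    (A B : Matrix (Fin n) (Fin n) k) (hA : IsUnit A) (hB : IsUnit B)
    {R : Type*} [Ring R] [Algebra k R]
    (u : Matrix (Fin n) (Fin n) R) (D Dinv : R)
    (relA : uᵀ * A.map (algebraMap k R) * u = D • A.map (algebraMap k R))
    (relB : u * B.map (algebraMap k R) * uᵀ = D • B.map (algebraMap k R))
    (relD : D * Dinv = 1) :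
    (B.map (algebraMap k R) * A.map (algebraMap k R)) * (D • u)
      = u * (D • (B.map (algebraMap k R) * A.map (algebraMap k R))) ∧
    (fun i j => D * u i j * Dinv)
      = (A⁻¹.map (algebraMap k R) * B⁻¹.map (algebraMap k R)) * u *
          (B.map (algebraMap k R) * A.map (algebraMap k R)) := by
  simp only [smul_eq_diagonal_mul, ← scalar_apply] at relA relB ⊢
  have hcomm := mul_mul_eq_of_similitude relA relB (scalar_commute_map_algebraMap D A)
    (scalar_commute_map_algebraMap D B)
  refine ⟨hcomm, ?_⟩
  have hinv : A⁻¹.map (algebraMap k R) * B⁻¹.map (algebraMap k R) *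
      (B.map (algebraMap k R) * A.map (algebraMap k R)) = 1 := by
    rw [mul_assoc, ← mul_assoc (B⁻¹.map _), map_nonsing_inv_mul_map _ hB, one_mul,
      map_nonsing_inv_mul_map _ hA]
  have hconj := conj_eq_of_mul_mul_eq hcomm
    ((scalar_commute_map_algebraMap D B).mul_right (scalar_commute_map_algebraMap D A)) hinv
    (by rw [← map_mul, relD, map_one])
  rw [← hconj]
  ext i j
  simp [mul_apply, diagonal]

/-- In the algebra `G(A,B)` (equivalently, in any algebra containing elements `u i j`, `D`,
`D⁻¹` satisfying the defining relations `uᵀ A u = A 𝔻`, `u B uᵀ = B 𝔻`, `𝔻 𝔻⁻¹ = 𝔻⁻¹ 𝔻 = 1`),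
the commutation relation `B A 𝔻 u = u 𝔻 B A` holds; equivalently
`𝔻 u 𝔻⁻¹ = A⁻¹ B⁻¹ u B A` (as matrices of algebra elements). -/
theorem stmt1 {k : Type*} [Field k] {n : ℕ} (hn : 2 ≤ n)
    (A B : Matrix (Fin n) (Fin n) k) (hA : IsUnit A) (hB : IsUnit B)
    {R : Type*} [Ring R] [Algebra k R]
    (u : Matrix (Fin n) (Fin n) R) (D Dinv : R)
    (relA : uᵀ * A.map (algebraMap k R) * u = D • A.map (algebraMap k R))
    (relB : u * B.map (algebraMap k R) * uᵀ = D • B.map (algebraMap k R))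
    (relD : D * Dinv = 1) (relD' : Dinv * D = 1) :
    (B.map (algebraMap k R) * A.map (algebraMap k R)) * (D • u)
      = u * (D • (B.map (algebraMap k R) * A.map (algebraMap k R))) ∧
    (fun i j => D * u i j * Dinv)
      = (A⁻¹.map (algebraMap k R) * B⁻¹.map (algebraMap k R)) * u *
          (B.map (algebraMap k R) * A.map (algebraMap k R)) :=
  stmt1_general A B hA hB u D Dinv relA relB relD
end

section
/- The algebra G(A,B) admits a bialgebra structure with comultiplication Δ(u_{ij}) = Σ_k u_{ik} ⊗ u_{kj}, Δ(D^{±1}) = D^{±1} ⊗ D^{±1}, and counit ε(u_{ij}) = δ_{ij}, ε(D^{±1}) = 1; i.e., these assignments extend to well-defined algebra homomorphisms Δ: G(A,B) → G(A,B) ⊗ G(A,B) and ε: G(A,B) → k respecting the defining relations. -/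
open Matrix

/-- Generators of the algebra `G(A,B)`: the `u i j`, `𝔻`, and `𝔻⁻¹`. -/
inductive GABgen (n : ℕ) : Type
  | u : Fin n → Fin n → GABgen n
  | D : GABgen n
  | Dinv : GABgen n

/-- The matrix of generators `u` inside the free algebra. -/
noncomputable def GABu (k : Type*) [Field k] (n : ℕ) :
    Matrix (Fin n) (Fin n) (FreeAlgebra k (GABgen n)) :=
  fun i j => FreeAlgebra.ι k (GABgen.u i j)

/-- The defining relations of `G(A,B)`: `uᵀ A u = A 𝔻`, `u B uᵀ = B 𝔻`,
`𝔻 𝔻⁻¹ = 1 = 𝔻⁻¹ 𝔻`. -/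
inductive GABrel (k : Type*) [Field k] {n : ℕ} (A B : Matrix (Fin n) (Fin n) k) :
    FreeAlgebra k (GABgen n) → FreeAlgebra k (GABgen n) → Prop
  | relA (i j : Fin n) : GABrel k A B
      ((((GABu k n)ᵀ * A.map (algebraMap k (FreeAlgebra k (GABgen n))) * GABu k n)) i j)
      (algebraMap k (FreeAlgebra k (GABgen n)) (A i j) * FreeAlgebra.ι k GABgen.D)
  | relB (i j : Fin n) : GABrel k A B
      (((GABu k n * B.map (algebraMap k (FreeAlgebra k (GABgen n))) * (GABu k n)ᵀ)) i j)
      (algebraMap k (FreeAlgebra k (GABgen n)) (B i j) * FreeAlgebra.ι k GABgen.D)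
  | relD : GABrel k A B (FreeAlgebra.ι k GABgen.D * FreeAlgebra.ι k GABgen.Dinv) 1
  | relD' : GABrel k A B (FreeAlgebra.ι k GABgen.Dinv * FreeAlgebra.ι k GABgen.D) 1

/-- The algebra `G(A,B)`, presented by generators `u i j`, `𝔻`, `𝔻⁻¹` and the relations above. -/
noncomputable def GAB (k : Type*) [Field k] {n : ℕ} (A B : Matrix (Fin n) (Fin n) k) : Type _ :=
  RingQuot (GABrel k A B)

noncomputable instance (k : Type*) [Field k] {n : ℕ} (A B : Matrix (Fin n) (Fin n) k) :
    Ring (GAB k A B) := by unfold GAB; infer_instance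

noncomputable instance (k : Type*) [Field k] {n : ℕ} (A B : Matrix (Fin n) (Fin n) k) :
    Algebra k (GAB k A B) := by unfold GAB; infer_instance

/-- The generators `u i j` of `G(A,B)`. -/
noncomputable def GABU (k : Type*) [Field k] {n : ℕ} (A B : Matrix (Fin n) (Fin n) k)
    (i j : Fin n) : GAB k A B :=
  RingQuot.mkAlgHom k (GABrel k A B) (FreeAlgebra.ι k (GABgen.u i j))

/-- The generator `𝔻` of `G(A,B)`. -/
noncomputable def GABD (k : Type*) [Field k] {n : ℕ} (A B : Matrix (Fin n) (Fin n) k) :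
    GAB k A B :=
  RingQuot.mkAlgHom k (GABrel k A B) (FreeAlgebra.ι k GABgen.D)

/-- The generator `𝔻⁻¹` of `G(A,B)`. -/
noncomputable def GABDinv (k : Type*) [Field k] {n : ℕ} (A B : Matrix (Fin n) (Fin n) k) :
    GAB k A B :=
  RingQuot.mkAlgHom k (GABrel k A B) (FreeAlgebra.ι k GABgen.Dinv)

open scoped TensorProduct

/-!
`G(A,B)` represents the functor sending a `k`-algebra `R` to the triples `(U, d, d')` with
`Uᵀ A U = A d`, `U B Uᵀ = B d` and `d d' = d' d = 1`. The identity matrix with `d = d' = 1` is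
such a point of `k`, which gives `ε`. If `(U, d, d')` is a point of `R` and `(V, e, e')` one of
`S`, then `(U ⊗ V, d ⊗ e, d' ⊗ e')` with `(U ⊗ V)ᵢⱼ = ∑ₗ Uᵢₗ ⊗ Vₗⱼ` is a point of `R ⊗ S`:
in `U ⊗ V = (U ⊗ 1)(1 ⊗ V)` the entries of the two factors commute, so the transpose of the
product is `(1 ⊗ V)ᵀ (U ⊗ 1)ᵀ`, and `d ⊗ 1` can be moved past `1 ⊗ V` (and `1 ⊗ e` past
`U ⊗ 1`). Applied to the generic point of `G(A,B)` twice, this gives `Δ`.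
-/

theorem Matrix.transpose_mul_of_commute {l m n R : Type*} [Fintype m] [NonUnitalSemiring R]
    (X : Matrix l m R) (Y : Matrix m n R) (h : ∀ a b c d, Commute (X a b) (Y c d)) :
    (X * Y)ᵀ = Yᵀ * Xᵀ := by
  ext i j
  simp only [transpose_apply, mul_apply]
  exact Finset.sum_congr rfl fun l _ => h _ _ _ _

theorem Matrix.map_scalar {m α β F : Type*} [DecidableEq m] [Fintype m] [Semiring α]
    [Semiring β] [FunLike F α β] [RingHomClass F α β] (f : F) (x : α) :
    (scalar m x).map f = scalar m (f x) := by
  simp [Matrix.diagonal_map]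

theorem Matrix.map_algebraMap_map {k R S m n : Type*} [CommSemiring k] [Semiring R] [Algebra k R]
    [Semiring S] [Algebra k S] (M : Matrix m n k) (f : R →ₐ[k] S) :
    (M.map (algebraMap k R)).map f = M.map (algebraMap k S) := by
  ext; simp

/-- The conditions on the images `U`, `d`, `d'` of `u`, `𝔻`, `𝔻⁻¹` under a `k`-algebra map
`G(A,B) → R`; see `GAB.lift`. -/
structure IsGABPoint {k : Type*} [Field k] {n : ℕ} {R : Type*} [Ring R] [Algebra k R]
    (A B : Matrix (Fin n) (Fin n) k) (U : Matrix (Fin n) (Fin n) R) (d d' : R) : Prop where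
  transpose_mul_mul : Uᵀ * A.map (algebraMap k R) * U = A.map (algebraMap k R) * scalar (Fin n) d
  mul_mul_transpose : U * B.map (algebraMap k R) * Uᵀ = B.map (algebraMap k R) * scalar (Fin n) d
  mul_inv : d * d' = 1
  inv_mul : d' * d = 1

namespace IsGABPoint

variable {k : Type*} [Field k] {n : ℕ} {A B : Matrix (Fin n) (Fin n) k}
  {R S : Type*} [Ring R] [Algebra k R] [Ring S] [Algebra k S]
  {U : Matrix (Fin n) (Fin n) R} {d d' : R}

theorem map (h : IsGABPoint A B U d d') (f : R →ₐ[k] S) :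
    IsGABPoint A B (U.map f) (f d) (f d') := by
  refine ⟨?_, ?_, ?_, ?_⟩
  · simpa only [map_mul, AlgHom.mapMatrix_apply, Matrix.transpose_map, Matrix.map_algebraMap_map,
      Matrix.map_scalar f] using congrArg f.mapMatrix h.transpose_mul_mul
  · simpa only [map_mul, AlgHom.mapMatrix_apply, Matrix.transpose_map, Matrix.map_algebraMap_map,
      Matrix.map_scalar f] using congrArg f.mapMatrix h.mul_mul_transpose
  · rw [← map_mul, h.mul_inv, map_one]
  · rw [← map_mul, h.inv_mul, map_one]

theorem tmul {V : Matrix (Fin n) (Fin n) S} {e e' : S} (hU : IsGABPoint A B U d d')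
    (hV : IsGABPoint A B V e e') :
    IsGABPoint A B (.of fun i j => ∑ l, U i l ⊗ₜ[k] V l j) (d ⊗ₜ[k] e) (d' ⊗ₜ[k] e') := by
  let inl : R →ₐ[k] R ⊗[k] S := Algebra.TensorProduct.includeLeft
  let inr : S →ₐ[k] R ⊗[k] S := Algebra.TensorProduct.includeRight
  set X := U.map inl
  set Y := V.map inr
  have hXY : Matrix.of (fun i j => ∑ l, U i l ⊗ₜ[k] V l j) = X * Y := by
    ext i j; simp [X, Y, inl, inr, Matrix.mul_apply]
  have comm (x : R) (y : S) : Commute (inl x) (inr y) :=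
    (Commute.one_right x).tmul (Commute.one_left y)
  have hde : d ⊗ₜ[k] e = inl d * inr e := by simp [inl, inr]
  have hX := hU.map inl
  have hY := hV.map inr
  rw [hXY, hde]
  refine ⟨?_, ?_, ?_, ?_⟩
  · have hdY : Commute (scalar (Fin n) (inl d)) Y :=
      scalar_commute_iff.2 <| Matrix.ext fun _ _ => comm _ _
    calc (X * Y)ᵀ * A.map (algebraMap k _) * (X * Y)
        = Yᵀ * (Xᵀ * A.map (algebraMap k _) * X) * Y := by
          rw [Matrix.transpose_mul_of_commute X Y fun _ _ _ _ => comm _ _]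
          simp only [Matrix.mul_assoc]
      _ = (Yᵀ * A.map (algebraMap k _) * Y) * scalar (Fin n) (inl d) := by
          rw [hX.transpose_mul_mul]
          simp only [Matrix.mul_assoc, hdY.eq]
      _ = A.map (algebraMap k _) * scalar (Fin n) (inl d * inr e) := by
          rw [hY.transpose_mul_mul, Matrix.mul_assoc, ← map_mul, (comm d e).eq]
  · have heX : Commute (scalar (Fin n) (inr e)) Xᵀ :=
      scalar_commute_iff.2 <| Matrix.ext fun _ _ => (comm _ _).symm
    calc X * Y * B.map (algebraMap k _) * (X * Y)ᵀ
        = X * (Y * B.map (algebraMap k _) * Yᵀ) * Xᵀ := by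
          rw [Matrix.transpose_mul_of_commute X Y fun _ _ _ _ => comm _ _]
          simp only [Matrix.mul_assoc]
      _ = (X * B.map (algebraMap k _) * Xᵀ) * scalar (Fin n) (inr e) := by
          rw [hY.mul_mul_transpose]
          simp only [Matrix.mul_assoc, heX.eq]
      _ = B.map (algebraMap k _) * scalar (Fin n) (inl d * inr e) := by
          rw [hX.mul_mul_transpose, Matrix.mul_assoc, ← map_mul]
  · simp [inl, inr, hU.mul_inv, hV.mul_inv, Algebra.TensorProduct.one_def]
  · simp [inl, inr, hU.inv_mul, hV.inv_mul, Algebra.TensorProduct.one_def]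

end IsGABPoint

section

variable {k : Type*} [Field k] {n : ℕ} (A B : Matrix (Fin n) (Fin n) k)

theorem isGABPoint_one : IsGABPoint A B (1 : Matrix (Fin n) (Fin n) k) 1 1 where
  transpose_mul_mul := by simp
  mul_mul_transpose := by simp
  mul_inv := one_mul 1
  inv_mul := one_mul 1

theorem isGABPoint_map_iff {R : Type*} [Ring R] [Algebra k R]
    (f : FreeAlgebra k (GABgen n) →ₐ[k] R) :
    IsGABPoint A B ((GABu k n).map f) (f (.ι k .D)) (f (.ι k .Dinv)) ↔
      ∀ ⦃x y⦄, GABrel k A B x y → f x = f y := by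
  set D : FreeAlgebra k (GABgen n) := .ι k .D
  have scalar_eq (M : Matrix (Fin n) (Fin n) k) :
      M.map (algebraMap k R) * scalar (Fin n) (f D)
        = f.mapMatrix (M.map (algebraMap k _) * scalar (Fin n) D) := by
    simp only [map_mul, AlgHom.mapMatrix_apply, Matrix.map_algebraMap_map, Matrix.map_scalar]
  have hA : ((GABu k n).map f)ᵀ * A.map (algebraMap k R) * (GABu k n).map f
        = A.map (algebraMap k R) * scalar (Fin n) (f D) ↔
      ∀ i j, f (((GABu k n)ᵀ * A.map (algebraMap k (FreeAlgebra k (GABgen n))) * GABu k n) i j)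
        = f (algebraMap k _ (A i j) * D) := by
    have lhs_eq : ((GABu k n).map f)ᵀ * A.map (algebraMap k R) * (GABu k n).map f
        = f.mapMatrix ((GABu k n)ᵀ * A.map (algebraMap k _) * GABu k n) := by
      simp only [map_mul, AlgHom.mapMatrix_apply, Matrix.transpose_map, Matrix.map_algebraMap_map]
    rw [lhs_eq, scalar_eq, ← Matrix.ext_iff]
    simp only [AlgHom.mapMatrix_apply, Matrix.map_apply, scalar_apply, Matrix.mul_diagonal]
  have hB : (GABu k n).map f * B.map (algebraMap k R) * ((GABu k n).map f)ᵀ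
        = B.map (algebraMap k R) * scalar (Fin n) (f D) ↔
      ∀ i j, f ((GABu k n * B.map (algebraMap k (FreeAlgebra k (GABgen n))) * (GABu k n)ᵀ) i j)
        = f (algebraMap k _ (B i j) * D) := by
    have lhs_eq : (GABu k n).map f * B.map (algebraMap k R) * ((GABu k n).map f)ᵀ
        = f.mapMatrix (GABu k n * B.map (algebraMap k _) * (GABu k n)ᵀ) := by
      simp only [map_mul, AlgHom.mapMatrix_apply, Matrix.transpose_map, Matrix.map_algebraMap_map]
    rw [lhs_eq, scalar_eq, ← Matrix.ext_iff]
    simp only [AlgHom.mapMatrix_apply, Matrix.map_apply, scalar_apply, Matrix.mul_diagonal]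
  constructor
  · rintro h x y (⟨i, j⟩ | ⟨i, j⟩ | _ | _)
    · exact hA.1 h.transpose_mul_mul i j
    · exact hB.1 h.mul_mul_transpose i j
    · simpa using h.mul_inv
    · simpa using h.inv_mul
  · intro h
    refine ⟨hA.2 fun i j => h (.relA i j), hB.2 fun i j => h (.relB i j), ?_, ?_⟩
    · simpa using h .relD
    · simpa using h .relD'

theorem isGABPoint_generators :
    IsGABPoint A B (.of (GABU k A B)) (GABD k A B) (GABDinv k A B) :=
  (isGABPoint_map_iff A B (RingQuot.mkAlgHom k (GABrel k A B))).2 fun _ _ => RingQuot.mkAlgHom_rel k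

end

namespace GAB

variable {k : Type*} [Field k] {n : ℕ} {A B : Matrix (Fin n) (Fin n) k}
  {R : Type*} [Ring R] [Algebra k R] {U : Matrix (Fin n) (Fin n) R} {d d' : R}

variable (k) in
noncomputable def freeLift (U : Matrix (Fin n) (Fin n) R) (d d' : R) :
    FreeAlgebra k (GABgen n) →ₐ[k] R :=
  FreeAlgebra.lift k fun
    | .u i j => U i j
    | .D => d
    | .Dinv => d'

theorem freeLift_rel (h : IsGABPoint A B U d d') :
    ∀ ⦃x y⦄, GABrel k A B x y → freeLift k U d d' x = freeLift k U d d' y := by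
  have hU : (GABu k n).map (freeLift k U d d') = U := by ext; simp [freeLift, GABu]
  exact (isGABPoint_map_iff A B (freeLift k U d d')).1 <| by
    rw [hU]; simpa [freeLift] using h

noncomputable def lift (h : IsGABPoint A B U d d') : GAB k A B →ₐ[k] R :=
  RingQuot.liftAlgHom k ⟨freeLift k U d d', freeLift_rel h⟩

@[simp]
theorem lift_U (h : IsGABPoint A B U d d') (i j : Fin n) : lift h (GABU k A B i j) = U i j :=
  (RingQuot.liftAlgHom_mkAlgHom_apply k _ _ _).trans (by simp [freeLift])

@[simp]
theorem lift_D (h : IsGABPoint A B U d d') : lift h (GABD k A B) = d :=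
  (RingQuot.liftAlgHom_mkAlgHom_apply k _ _ _).trans (by simp [freeLift])

@[simp]
theorem lift_Dinv (h : IsGABPoint A B U d d') : lift h (GABDinv k A B) = d' :=
  (RingQuot.liftAlgHom_mkAlgHom_apply k _ _ _).trans (by simp [freeLift])

end GAB

theorem stmt2_general {k : Type*} [Field k] {n : ℕ}
    (A B : Matrix (Fin n) (Fin n) k) :
    (∃ Δ : GAB k A B →ₐ[k] (GAB k A B ⊗[k] GAB k A B),
      (∀ i j, Δ (GABU k A B i j) = ∑ l, GABU k A B i l ⊗ₜ[k] GABU k A B l j) ∧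
      Δ (GABD k A B) = GABD k A B ⊗ₜ[k] GABD k A B ∧
      Δ (GABDinv k A B) = GABDinv k A B ⊗ₜ[k] GABDinv k A B) ∧
    (∃ ε : GAB k A B →ₐ[k] k,
      (∀ i j, ε (GABU k A B i j) = if i = j then 1 else 0) ∧
      ε (GABD k A B) = 1 ∧ ε (GABDinv k A B) = 1) :=
  ⟨⟨GAB.lift ((isGABPoint_generators A B).tmul (isGABPoint_generators A B)), by simp⟩,
    ⟨GAB.lift (isGABPoint_one A B), by simp [Matrix.one_apply]⟩⟩

/-- The assignments `Δ(u i j) = ∑ l, u i l ⊗ u l j`, `Δ(𝔻^{±1}) = 𝔻^{±1} ⊗ 𝔻^{±1}` and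
`ε(u i j) = δ_{ij}`, `ε(𝔻^{±1}) = 1` extend to well-defined algebra homomorphisms
`Δ : G(A,B) → G(A,B) ⊗ G(A,B)` and `ε : G(A,B) → k`. -/
theorem stmt2 {k : Type*} [Field k] {n : ℕ} (hn : 2 ≤ n)
    (A B : Matrix (Fin n) (Fin n) k) (hA : IsUnit A) (hB : IsUnit B) :
    (∃ Δ : GAB k A B →ₐ[k] (GAB k A B ⊗[k] GAB k A B),
      (∀ i j, Δ (GABU k A B i j) = ∑ l, GABU k A B i l ⊗ₜ[k] GABU k A B l j) ∧
      Δ (GABD k A B) = GABD k A B ⊗ₜ[k] GABD k A B ∧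
      Δ (GABDinv k A B) = GABDinv k A B ⊗ₜ[k] GABDinv k A B) ∧
    (∃ ε : GAB k A B →ₐ[k] k,
      (∀ i j, ε (GABU k A B i j) = if i = j then 1 else 0) ∧
      ε (GABD k A B) = 1 ∧ ε (GABDinv k A B) = 1) :=
  stmt2_general A B
end

section
/- In the Hopf algebra G(A,B) with B^t A^t B A = λ I_n, the square of the antipode satisfies S^2(u) = B A^t u (A^t)^{-1} B^{-1} (entrywise matrix equation) and S^2(D^{±1}) = D^{±1}. -/
open Matrix

open scoped TensorProduct

/-- The matrix of generators of `G(A,B)` regarded as elements of `G(A,B)`. -/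
noncomputable def GABumat (k : Type*) [Field k] {n : ℕ} (A B : Matrix (Fin n) (Fin n) k) :
    Matrix (Fin n) (Fin n) (GAB k A B) := fun i j => GABU k A B i j


/-!
The relation `uᵀ A u = A 𝔻` says that `S(u) = 𝔻⁻¹ A⁻¹ uᵀ A` is a left inverse of `u`, and
`u B uᵀ = B 𝔻` says that `B uᵀ 𝔻⁻¹ B⁻¹` is a right inverse, so the two coincide. Since `S` is
anti-multiplicative and fixes scalars, `M ↦ (S M)ᵀ` is multiplicative on matrices; applied to the
second expression it gives `S²(u)ᵀ = B⁻ᵀ (A⁻¹ uᵀ A) Bᵀ`, which is the transpose of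
`B Aᵀ u (Aᵀ)⁻¹ B⁻¹`.
-/

section AntiMultiplicative

variable {l m o α β : Type*} [Fintype m] [Semiring α] [Semiring β]

theorem Matrix.transpose_map_mul_of_map_mul_rev (S : α →+ β)
    (hS : ∀ x y, S (x * y) = S y * S x) (M : Matrix l m α) (N : Matrix m o α) :
    ((M * N).map S)ᵀ = (N.map S)ᵀ * (M.map S)ᵀ := by
  ext i j
  simp [Matrix.mul_apply, map_sum, hS]

end AntiMultiplicative

section ScalarMatrices

variable {k R : Type*} [CommSemiring k] [Semiring R] [Algebra k R]
  {l m o p : Type*} [Fintype m]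

theorem Matrix.transpose_map_algebraMap_mul (C : Matrix l m k) (M : Matrix m o R) :
    (C.map (algebraMap k R) * M)ᵀ = Mᵀ * Cᵀ.map (algebraMap k R) := by
  ext i j
  exact Finset.sum_congr rfl fun p _ => Algebra.commutes (C j p) (M p i)

theorem Matrix.transpose_mul_map_algebraMap (M : Matrix l m R) (C : Matrix m o k) :
    (M * C.map (algebraMap k R))ᵀ = Cᵀ.map (algebraMap k R) * Mᵀ := by
  ext i j
  exact Finset.sum_congr rfl fun p _ => (Algebra.commutes (C p i) (M j p)).symm

theorem Matrix.transpose_map_algebraMap_mul_mul_of_map_mul_rev [Fintype o] (S : R →+ R)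
    (hS : ∀ x y, S (x * y) = S y * S x) (hSk : ∀ c, S (algebraMap k R c) = algebraMap k R c)
    (C : Matrix l m k) (M : Matrix m o R) (C' : Matrix o p k) :
    ((C.map (algebraMap k R) * M * C'.map (algebraMap k R)).map S)ᵀ =
      C'ᵀ.map (algebraMap k R) * (M.map S)ᵀ * Cᵀ.map (algebraMap k R) := by
  rw [Matrix.transpose_map_mul_of_map_mul_rev S hS, Matrix.transpose_map_mul_of_map_mul_rev S hS,
    ← Matrix.mul_assoc]
  congr 2 <;> ext i j <;> exact hSk _

end ScalarMatrices

namespace GAB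

variable {k : Type*} [Field k] {n : ℕ} (A B : Matrix (Fin n) (Fin n) k)

theorem umat_transpose_mul_mul_umat :
    (GABumat k A B)ᵀ * A.map (algebraMap k (GAB k A B)) * GABumat k A B =
      A.map (algebraMap k (GAB k A B)) * diagonal fun _ => GABD k A B := by
  ext i j
  have h := RingQuot.mkAlgHom_rel k (GABrel.relA (A := A) (B := B) i j)
  simp only [Matrix.mul_apply, map_sum, map_mul, AlgHom.commutes, GABu, Matrix.transpose_apply,
    Matrix.map_apply] at h
  -- `GAB` is a plain `def`, so `rw` cannot see through it to the instances of `RingQuot`.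
  erw [Matrix.mul_diagonal]
  exact h

theorem umat_mul_mul_umat_transpose :
    GABumat k A B * B.map (algebraMap k (GAB k A B)) * (GABumat k A B)ᵀ =
      B.map (algebraMap k (GAB k A B)) * diagonal fun _ => GABD k A B := by
  ext i j
  have h := RingQuot.mkAlgHom_rel k (GABrel.relB (A := A) (B := B) i j)
  simp only [Matrix.mul_apply, map_sum, map_mul, AlgHom.commutes, GABu, Matrix.transpose_apply,
    Matrix.map_apply] at h
  erw [Matrix.mul_diagonal]
  exact h

theorem D_mul_Dinv : GABD k A B * GABDinv k A B = 1 := by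
  have h := RingQuot.mkAlgHom_rel k (GABrel.relD (A := A) (B := B))
  rwa [map_mul, map_one] at h

theorem Dinv_mul_D : GABDinv k A B * GABD k A B = 1 := by
  have h := RingQuot.mkAlgHom_rel k (GABrel.relD' (A := A) (B := B))
  rwa [map_mul, map_one] at h

end GAB

section AntipodeSquare

variable {k R : Type*} [CommRing k] [Ring R] [Algebra k R] {m : Type*} [Fintype m]
  [DecidableEq m] {U : Matrix m m R} {d d' : R}

theorem diagonal_mul_transpose_conj_mul_eq_one {A : Matrix m m k} (hA : IsUnit A.det)
    (hAU : Uᵀ * A.map (algebraMap k R) * U = A.map (algebraMap k R) * diagonal fun _ => d)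
    (hd : d' * d = 1) :
    diagonal (fun _ => d') * (A⁻¹.map (algebraMap k R) * Uᵀ * A.map (algebraMap k R)) * U = 1 :=
  calc _ = diagonal (fun _ => d') * (A⁻¹.map (algebraMap k R) *
          (Uᵀ * A.map (algebraMap k R) * U)) := by simp only [mul_assoc]
    _ = diagonal (fun _ => d') * ((A⁻¹ * A).map (algebraMap k R) * diagonal fun _ => d) := by
      rw [hAU, Matrix.map_mul, mul_assoc]
    _ = 1 := by
      rw [Matrix.nonsing_inv_mul A hA, Matrix.map_one _ (map_zero _) (map_one _), one_mul,
        Matrix.diagonal_mul_diagonal, hd, Matrix.diagonal_one]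

theorem mul_transpose_conj_mul_diagonal_eq_one {B : Matrix m m k} (hB : IsUnit B.det)
    (hUB : U * B.map (algebraMap k R) * Uᵀ = B.map (algebraMap k R) * diagonal fun _ => d)
    (hd : d * d' = 1) :
    U * (B.map (algebraMap k R) * Uᵀ * diagonal (fun _ => d') * B⁻¹.map (algebraMap k R)) = 1 :=
  calc _ = U * B.map (algebraMap k R) * Uᵀ * diagonal (fun _ => d') *
          B⁻¹.map (algebraMap k R) := by simp only [mul_assoc]
    _ = B.map (algebraMap k R) * B⁻¹.map (algebraMap k R) := by
      rw [hUB]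
      simp only [mul_assoc]
      rw [← mul_assoc (diagonal _), Matrix.diagonal_mul_diagonal, hd, Matrix.diagonal_one, one_mul]
    _ = 1 := by
      rw [← Matrix.map_mul, Matrix.mul_nonsing_inv B hB,
        Matrix.map_one _ (map_zero _) (map_one _)]

theorem transpose_map_transpose_mul_diagonal_conj (S : R →+ R)
    (hS : ∀ x y, S (x * y) = S y * S x) (hSk : ∀ c, S (algebraMap k R c) = algebraMap k R c)
    {X : Matrix m m R} (hSu : U.map S = diagonal (fun _ => d') * X) (hSd' : S d' = d)
    (hd : d * d' = 1) (C C' : Matrix m m k) :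
    ((C.map (algebraMap k R) * Uᵀ * diagonal (fun _ => d') * C'.map (algebraMap k R)).map S)ᵀ =
      C'ᵀ.map (algebraMap k R) * X * Cᵀ.map (algebraMap k R) := by
  have hSdiag : ((diagonal fun _ : m => d').map S)ᵀ * diagonal (fun _ => d') = 1 := by
    rw [Matrix.diagonal_map (map_zero S), Matrix.diagonal_transpose, Matrix.diagonal_mul_diagonal,
      hSd', hd, Matrix.diagonal_one]
  rw [Matrix.mul_assoc (C.map _), Matrix.transpose_map_algebraMap_mul_mul_of_map_mul_rev S hS hSk,
    Matrix.transpose_map_mul_of_map_mul_rev S hS, ← Matrix.transpose_map (M := Uᵀ),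
    Matrix.transpose_transpose, hSu, ← Matrix.mul_assoc _ (diagonal _), hSdiag, Matrix.one_mul]

theorem transpose_conj_mul_transpose (A B : Matrix m m k) (U : Matrix m m R) :
    ((B * Aᵀ).map (algebraMap k R) * U * ((Aᵀ)⁻¹ * B⁻¹).map (algebraMap k R))ᵀ =
      (B⁻¹)ᵀ.map (algebraMap k R) * (A⁻¹.map (algebraMap k R) * Uᵀ * A.map (algebraMap k R)) *
        Bᵀ.map (algebraMap k R) := by
  rw [Matrix.transpose_mul_map_algebraMap, Matrix.transpose_map_algebraMap_mul,
    Matrix.transpose_mul, Matrix.transpose_mul, Matrix.transpose_transpose,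
    ← Matrix.transpose_nonsing_inv, Matrix.transpose_transpose, Matrix.map_mul, Matrix.map_mul]
  simp only [Matrix.mul_assoc]

end AntipodeSquare

theorem stmt4_general {k : Type*} [Field k] {n : ℕ}
    (A B : Matrix (Fin n) (Fin n) k) (hA : IsUnit A) (hB : IsUnit B)
    (S : GAB k A B → GAB k A B)
    (hadd : ∀ x y, S (x + y) = S x + S y)
    (hmul : ∀ x y, S (x * y) = S y * S x)
    (hsc : ∀ c : k, S (algebraMap k (GAB k A B) c) = algebraMap k (GAB k A B) c)
    (hu : ∀ i j, S (GABU k A B i j) =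
      GABDinv k A B *
        ((A⁻¹.map (algebraMap k (GAB k A B)) * (GABumat k A B)ᵀ *
            A.map (algebraMap k (GAB k A B))) i j))
    (hD : S (GABD k A B) = GABDinv k A B)
    (hDinv : S (GABDinv k A B) = GABD k A B) :
    (∀ i j, S (S (GABU k A B i j)) =
      (((B * Aᵀ).map (algebraMap k (GAB k A B))) * GABumat k A B *
        (((Aᵀ)⁻¹ * B⁻¹).map (algebraMap k (GAB k A B)))) i j) ∧
    S (S (GABD k A B)) = GABD k A B ∧
    S (S (GABDinv k A B)) = GABDinv k A B := by
  refine ⟨fun i j => ?_, by rw [hD, hDinv], by rw [hDinv, hD]⟩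
  set U := GABumat k A B
  set X := A⁻¹.map (algebraMap k (GAB k A B)) * Uᵀ * A.map (algebraMap k (GAB k A B))
  set Sh : GAB k A B →+ GAB k A B := AddMonoidHom.mk' S hadd
  have hSu : U.map Sh = diagonal (fun _ => GABDinv k A B) * X := by
    ext i j
    erw [Matrix.diagonal_mul]
    exact hu i j
  have hleft_eq_right : diagonal (fun _ => GABDinv k A B) * X =
      B.map (algebraMap k (GAB k A B)) * Uᵀ * diagonal (fun _ => GABDinv k A B) *
        B⁻¹.map (algebraMap k (GAB k A B)) :=
    left_inv_eq_right_inv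
      (diagonal_mul_transpose_conj_mul_eq_one ((isUnit_iff_isUnit_det A).mp hA)
        (GAB.umat_transpose_mul_mul_umat A B) (GAB.Dinv_mul_D A B))
      (mul_transpose_conj_mul_diagonal_eq_one ((isUnit_iff_isUnit_det B).mp hB)
        (GAB.umat_mul_mul_umat_transpose A B) (GAB.D_mul_Dinv A B))
  calc S (S (GABU k A B i j)) = ((U.map Sh).map Sh)ᵀ j i := rfl
    _ = _ := by
      rw [hSu, hleft_eq_right, transpose_map_transpose_mul_diagonal_conj Sh hmul hsc hSu hDinv
        (GAB.D_mul_Dinv A B), ← transpose_conj_mul_transpose]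
      rfl

/-- If `Bᵀ Aᵀ B A = λ Iₙ` then the antipode `S` of `G(A,B)` (the algebra anti-endomorphism with
`S(u) = 𝔻⁻¹ A⁻¹ uᵀ A` and `S(𝔻^{±1}) = 𝔻^{∓1}`) satisfies
`S²(u) = B Aᵀ u (Aᵀ)⁻¹ B⁻¹` (entrywise) and `S²(𝔻^{±1}) = 𝔻^{±1}`. -/
theorem stmt4 {k : Type*} [Field k] {n : ℕ} (hn : 2 ≤ n)
    (A B : Matrix (Fin n) (Fin n) k) (hA : IsUnit A) (hB : IsUnit B)
    (lam : k) (hlam : lam ≠ 0)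
    (hrel : Bᵀ * Aᵀ * B * A = lam • (1 : Matrix (Fin n) (Fin n) k))
    (S : GAB k A B → GAB k A B)
    (hadd : ∀ x y, S (x + y) = S x + S y)
    (hmul : ∀ x y, S (x * y) = S y * S x)
    (hone : S 1 = 1)
    (hsc : ∀ c : k, S (algebraMap k (GAB k A B) c) = algebraMap k (GAB k A B) c)
    (hu : ∀ i j, S (GABU k A B i j) =
      GABDinv k A B *
        ((A⁻¹.map (algebraMap k (GAB k A B)) * (GABumat k A B)ᵀ *
            A.map (algebraMap k (GAB k A B))) i j))
    (hD : S (GABD k A B) = GABDinv k A B)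
    (hDinv : S (GABDinv k A B) = GABD k A B) :
    (∀ i j, S (S (GABU k A B i j)) =
      (((B * Aᵀ).map (algebraMap k (GAB k A B))) * GABumat k A B *
        (((Aᵀ)⁻¹ * B⁻¹).map (algebraMap k (GAB k A B)))) i j) ∧
    S (S (GABD k A B)) = GABD k A B ∧
    S (S (GABDinv k A B)) = GABDinv k A B :=
  stmt4_general A B hA hB S hadd hmul hsc hu hD hDinv
end

section
/- Let H be a Hopf algebra, V a right H-comodule, and X a right-right Yetter-Drinfeld module over H. The map f ↦ f̃, where f̃(v ⊗ h) = f(v)·h, is a natural linear isomorphism from Hom of right H-comodules Hom_{M^H}(V, X) to Hom of Yetter-Drinfeld modules Hom_{YD}(V ⊠ H, X). -/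
open TensorProduct

noncomputable section

variable (k : Type*) [CommRing k]

/-- The iterated comultiplication `h ↦ (h₍₁₎ ⊗ h₍₂₎) ⊗ h₍₃₎`. -/
def comul3 (H : Type*) [Ring H] [HopfAlgebra k H] : H →ₗ[k] (H ⊗[k] H) ⊗[k] H :=
  (TensorProduct.map Coalgebra.comul LinearMap.id) ∘ₗ Coalgebra.comul

/-- The "shuffle–antipode–multiply" map
`(m ⊗ v₁) ⊗ ((h₁ ⊗ h₂) ⊗ h₃) ↦ (m ⊗ h₂) ⊗ (S(h₁) v₁ h₃)` used to define the
Yetter–Drinfeld coaction on `V ⊠ H`. -/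
def ydCore (H : Type*) [Ring H] [HopfAlgebra k H]
    (M : Type*) [AddCommGroup M] [Module k M] :
    (M ⊗[k] H) ⊗[k] ((H ⊗[k] H) ⊗[k] H) →ₗ[k] (M ⊗[k] H) ⊗[k] H :=
  (TensorProduct.map LinearMap.id (LinearMap.mul' k H)) ∘ₗ
  (TensorProduct.map LinearMap.id (TensorProduct.map (LinearMap.mul' k H) LinearMap.id)) ∘ₗ
  (TensorProduct.assoc k (M ⊗[k] H) (H ⊗[k] H) H).toLinearMap ∘ₗ
  (TensorProduct.map
    ((TensorProduct.map LinearMap.id (TensorProduct.comm k H H).toLinearMap) ∘ₗ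
      (TensorProduct.tensorTensorTensorComm k M H H H).toLinearMap ∘ₗ
      (TensorProduct.map LinearMap.id (TensorProduct.comm k H H).toLinearMap))
    LinearMap.id) ∘ₗ
  (TensorProduct.assoc k (M ⊗[k] H) (H ⊗[k] H) H).symm.toLinearMap ∘ₗ
  (TensorProduct.map LinearMap.id
    (TensorProduct.map (TensorProduct.map (HopfAlgebra.antipode (R := k)) LinearMap.id)
      LinearMap.id))

/-- The free Yetter–Drinfeld coaction on `V ⊠ H = V ⊗ H`:
`v ⊗ h ↦ (v₍₀₎ ⊗ h₍₂₎) ⊗ (S(h₍₁₎) v₍₁₎ h₍₃₎)`. -/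
def ydCoaction (H : Type*) [Ring H] [HopfAlgebra k H]
    (V : Type*) [AddCommGroup V] [Module k V] (ρ : V →ₗ[k] V ⊗[k] H) :
    V ⊗[k] H →ₗ[k] (V ⊗[k] H) ⊗[k] H :=
  ydCore k H V ∘ₗ TensorProduct.map ρ (comul3 k H)

/-- The right `H`-action on `V ⊠ H = V ⊗ H` by multiplication on the second factor:
`(v ⊗ h) ⊗ g ↦ v ⊗ hg`. -/
def ydAction (H : Type*) [Ring H] [HopfAlgebra k H]
    (V : Type*) [AddCommGroup V] [Module k V] :
    (V ⊗[k] H) ⊗[k] H →ₗ[k] V ⊗[k] H :=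
  (TensorProduct.map LinearMap.id (LinearMap.mul' k H)) ∘ₗ
    (TensorProduct.assoc k V H H).toLinearMap

end

section Helpers

open TensorProduct

variable {k : Type*} [CommRing k] {H : Type*} [Ring H] [HopfAlgebra k H]

lemma my_antipode_one : HopfAlgebra.antipode (R := k) (1 : H) = 1 := by
  have := HopfAlgebra.mul_antipode_rTensor_comul_apply (R := k) (1 : H)
  simpa [Algebra.TensorProduct.one_def] using this

lemma ydCore_tmul {M : Type*} [AddCommGroup M] [Module k M] (m : M) (v : H) (h1 h2 h3 : H) :
    ydCore k H M ((m ⊗ₜ[k] v) ⊗ₜ[k] ((h1 ⊗ₜ[k] h2) ⊗ₜ[k] h3))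
      = (m ⊗ₜ[k] h2) ⊗ₜ[k] (HopfAlgebra.antipode (R := k) h1 * v * h3) := by
  simp [ydCore, mul_assoc]

lemma ydCore_natural {M N : Type*} [AddCommGroup M] [Module k M] [AddCommGroup N] [Module k N]
    (f : M →ₗ[k] N) :
    ydCore k H N ∘ₗ TensorProduct.map (TensorProduct.map f LinearMap.id) LinearMap.id
      = TensorProduct.map (TensorProduct.map f LinearMap.id) LinearMap.id ∘ₗ ydCore k H M := by
  ext m v h1 h2 h3
  simp [ydCore_tmul]

lemma comul3_one : comul3 k H 1 = ((1 : H) ⊗ₜ[k] (1 : H)) ⊗ₜ[k] (1 : H) := by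
  simp [comul3, Algebra.TensorProduct.one_def]

lemma ydCore_unit {V : Type*} [AddCommGroup V] [Module k V] (w : V ⊗[k] H) :
    ydCore k H V (w ⊗ₜ[k] (((1 : H) ⊗ₜ[k] (1 : H)) ⊗ₜ[k] (1 : H)))
      = TensorProduct.map ((TensorProduct.mk k V H).flip 1) LinearMap.id w := by
  induction w using TensorProduct.induction_on with
  | zero => simp
  | tmul v h => simp [ydCore_tmul, my_antipode_one]
  | add x y hx hy => rw [TensorProduct.add_tmul, map_add, map_add, hx, hy]

end Helpers

open TensorProduct in

open TensorProduct in
/-- For a Hopf algebra `H`, a right `H`-comodule `(V, ρ)` and a right-right Yetter–Drinfeld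
module `X` over `H` (with action `mX` and coaction `δX`), the assignment `f ↦ f̃`, where
`f̃(v ⊗ h) = f(v)·h`, is a natural linear isomorphism
`Hom_{M^H}(V, X) ≅ Hom_{YD^H_H}(V ⊠ H, X)`. -/
theorem stmt7 {k : Type*} [CommRing k] {H : Type*} [Ring H] [HopfAlgebra k H]
    {V : Type*} [AddCommGroup V] [Module k V] (ρ : V →ₗ[k] V ⊗[k] H)
    (hcoassoc : (TensorProduct.assoc k V H H).toLinearMap ∘ₗ
        (TensorProduct.map ρ LinearMap.id) ∘ₗ ρ
      = (TensorProduct.map LinearMap.id Coalgebra.comul) ∘ₗ ρ)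
    (hcounit : (TensorProduct.rid k V).toLinearMap ∘ₗ
        (TensorProduct.map LinearMap.id (Coalgebra.counit (R := k))) ∘ₗ ρ
      = LinearMap.id)
    {X : Type*} [AddCommGroup X] [Module k X]
    (mX : X ⊗[k] H →ₗ[k] X) (δX : X →ₗ[k] X ⊗[k] H)
    -- `mX` is a unital associative right action
    (hunit : ∀ x : X, mX (x ⊗ₜ[k] 1) = x)
    (hassoc : mX ∘ₗ (TensorProduct.map mX LinearMap.id)
      = mX ∘ₗ (TensorProduct.map LinearMap.id (LinearMap.mul' k H)) ∘ₗ
          (TensorProduct.assoc k X H H).toLinearMap)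
    -- `δX` is a comodule structure
    (hXcoassoc : (TensorProduct.assoc k X H H).toLinearMap ∘ₗ
        (TensorProduct.map δX LinearMap.id) ∘ₗ δX
      = (TensorProduct.map LinearMap.id Coalgebra.comul) ∘ₗ δX)
    (hXcounit : (TensorProduct.rid k X).toLinearMap ∘ₗ
        (TensorProduct.map LinearMap.id (Coalgebra.counit (R := k))) ∘ₗ δX
      = LinearMap.id)
    -- Yetter–Drinfeld compatibility of `X`
    (hYD : δX ∘ₗ mX = (TensorProduct.map mX LinearMap.id) ∘ₗ
        ydCore k H X ∘ₗ TensorProduct.map δX (comul3 k H)) :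
    -- `f ↦ f̃ = mX ∘ (f ⊗ id)` maps comodule morphisms to Yetter–Drinfeld morphisms ...
    (∀ f : V →ₗ[k] X, (TensorProduct.map f LinearMap.id) ∘ₗ ρ = δX ∘ₗ f →
      (mX ∘ₗ TensorProduct.map f LinearMap.id) ∘ₗ ydAction k H V
          = mX ∘ₗ TensorProduct.map (mX ∘ₗ TensorProduct.map f LinearMap.id) LinearMap.id ∧
      (TensorProduct.map (mX ∘ₗ TensorProduct.map f LinearMap.id) LinearMap.id) ∘ₗ
            ydCoaction k H V ρ
          = δX ∘ₗ (mX ∘ₗ TensorProduct.map f LinearMap.id)) ∧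
    -- ... injectively ...
    (∀ f g : V →ₗ[k] X,
      (TensorProduct.map f LinearMap.id) ∘ₗ ρ = δX ∘ₗ f →
      (TensorProduct.map g LinearMap.id) ∘ₗ ρ = δX ∘ₗ g →
      mX ∘ₗ TensorProduct.map f LinearMap.id = mX ∘ₗ TensorProduct.map g LinearMap.id →
      f = g) ∧
    -- ... and surjectively onto the Yetter–Drinfeld morphisms ...
    (∀ G : V ⊗[k] H →ₗ[k] X,
      G ∘ₗ ydAction k H V = mX ∘ₗ TensorProduct.map G LinearMap.id →
      (TensorProduct.map G LinearMap.id) ∘ₗ ydCoaction k H V ρ = δX ∘ₗ G →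
      ∃ f : V →ₗ[k] X, (TensorProduct.map f LinearMap.id) ∘ₗ ρ = δX ∘ₗ f ∧
        mX ∘ₗ TensorProduct.map f LinearMap.id = G) ∧
    -- ... and linearly.
    (∀ f g : V →ₗ[k] X,
      mX ∘ₗ TensorProduct.map (f + g) LinearMap.id
        = mX ∘ₗ TensorProduct.map f LinearMap.id + mX ∘ₗ TensorProduct.map g LinearMap.id) ∧
    (∀ (c : k) (f : V →ₗ[k] X),
      mX ∘ₗ TensorProduct.map (c • f) LinearMap.id
        = c • (mX ∘ₗ TensorProduct.map f LinearMap.id)) := by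
  refine ⟨?_, ?_, ?_, ?_, ?_⟩
  · intro f hf
    constructor
    · ext v h g
      have := LinearMap.congr_fun hassoc (((f v) ⊗ₜ[k] h) ⊗ₜ[k] g)
      simp only [LinearMap.coe_comp, Function.comp_apply, TensorProduct.map_tmul,
        LinearMap.id_coe, id_eq, LinearEquiv.coe_coe, TensorProduct.assoc_tmul,
        LinearMap.mul'_apply] at this ⊢
      simp only [ydAction, LinearMap.coe_comp, Function.comp_apply, LinearEquiv.coe_coe,
        TensorProduct.assoc_tmul, TensorProduct.map_tmul, LinearMap.id_coe, id_eq,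
        LinearMap.mul'_apply]
      exact this.symm
    · have e1 : TensorProduct.map (mX ∘ₗ TensorProduct.map f LinearMap.id)
          (LinearMap.id : H →ₗ[k] H)
          = TensorProduct.map mX LinearMap.id ∘ₗ
            TensorProduct.map (TensorProduct.map f LinearMap.id) LinearMap.id := by
        rw [← TensorProduct.map_comp]; rfl
      have key : TensorProduct.map (TensorProduct.map f LinearMap.id) LinearMap.id ∘ₗ
            TensorProduct.map ρ (comul3 k H)
          = TensorProduct.map δX (comul3 k H) ∘ₗ TensorProduct.map f LinearMap.id := by
        rw [← TensorProduct.map_comp, ← TensorProduct.map_comp, hf]; rfl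
      rw [ydCoaction, e1]
      calc (TensorProduct.map mX LinearMap.id ∘ₗ
              TensorProduct.map (TensorProduct.map f LinearMap.id) LinearMap.id) ∘ₗ
            (ydCore k H V ∘ₗ TensorProduct.map ρ (comul3 k H))
          = TensorProduct.map mX LinearMap.id ∘ₗ
              ((TensorProduct.map (TensorProduct.map f LinearMap.id) LinearMap.id ∘ₗ
                ydCore k H V) ∘ₗ TensorProduct.map ρ (comul3 k H)) := rfl
        _ = TensorProduct.map mX LinearMap.id ∘ₗ
              ((ydCore k H X ∘ₗ
                TensorProduct.map (TensorProduct.map f LinearMap.id) LinearMap.id) ∘ₗ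
                TensorProduct.map ρ (comul3 k H)) := by rw [ydCore_natural]
        _ = TensorProduct.map mX LinearMap.id ∘ₗ (ydCore k H X ∘ₗ
              (TensorProduct.map (TensorProduct.map f LinearMap.id) LinearMap.id ∘ₗ
                TensorProduct.map ρ (comul3 k H))) := rfl
        _ = TensorProduct.map mX LinearMap.id ∘ₗ (ydCore k H X ∘ₗ
              (TensorProduct.map δX (comul3 k H) ∘ₗ TensorProduct.map f LinearMap.id)) := by
            rw [key]
        _ = (TensorProduct.map mX LinearMap.id ∘ₗ ydCore k H X ∘ₗ
              TensorProduct.map δX (comul3 k H)) ∘ₗ TensorProduct.map f LinearMap.id := rfl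
        _ = (δX ∘ₗ mX) ∘ₗ TensorProduct.map f LinearMap.id := by rw [hYD]
        _ = δX ∘ₗ (mX ∘ₗ TensorProduct.map f LinearMap.id) := rfl
  · intro f g hf hg h
    ext v
    have := LinearMap.congr_fun h (v ⊗ₜ[k] (1 : H))
    simpa [hunit] using this
  · intro G hGm hGc
    refine ⟨G ∘ₗ ((TensorProduct.mk k V H).flip 1), ?_, ?_⟩
    · ext v
      have h1 := LinearMap.congr_fun hGc (v ⊗ₜ[k] (1 : H))
      simp only [ydCoaction, LinearMap.coe_comp, Function.comp_apply,
        TensorProduct.map_tmul, comul3_one, LinearMap.id_coe, id_eq] at h1 ⊢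
      rw [ydCore_unit (ρ v)] at h1
      have h2 : TensorProduct.map G (LinearMap.id : H →ₗ[k] H) ∘ₗ
          TensorProduct.map ((TensorProduct.mk k V H).flip 1) LinearMap.id
          = TensorProduct.map (G ∘ₗ (TensorProduct.mk k V H).flip 1) LinearMap.id := by
        rw [← TensorProduct.map_comp]; rfl
      rw [← LinearMap.congr_fun h2 (ρ v)] at *
      simpa [TensorProduct.mk_apply] using h1
    · ext v h
      have := LinearMap.congr_fun hGm ((v ⊗ₜ[k] (1 : H)) ⊗ₜ[k] h)
      simp only [ydAction, LinearMap.coe_comp, Function.comp_apply, LinearEquiv.coe_coe,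
        TensorProduct.assoc_tmul, TensorProduct.map_tmul, LinearMap.id_coe, id_eq,
        LinearMap.mul'_apply, one_mul] at this
      simpa [TensorProduct.mk_apply] using this.symm
  · intro f g
    ext v h
    simp [TensorProduct.add_tmul]
  · intro c f
    ext v h
    show mX (TensorProduct.map (c • f) LinearMap.id (v ⊗ₜ[k] h))
      = c • mX (TensorProduct.map f LinearMap.id (v ⊗ₜ[k] h))
    rw [TensorProduct.map_tmul, TensorProduct.map_tmul, LinearMap.smul_apply,
      ← TensorProduct.smul_tmul', map_smul]
end

section
/- There is an algebra isomorphism O(GL_q(2)) ≅ O(SL_q(2))[z, z^{-1}] sending a ↦ ā z, b ↦ b̄ z, c ↦ c̄, d ↦ d̄, where z is a central invertible indeterminate. -/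
/-- Generators `a, b, c, d, D⁻¹` of `O(GL_q(2))`. -/
inductive GLqGen : Type
  | a | b | c | d | dinv

/-- Generators `ā, b̄, c̄, d̄, z, z⁻¹` of `O(SL_q(2))[z^{±1}]`. -/
inductive SLzGen : Type
  | a | b | c | d | z | zinv

open FreeAlgebra

/-- The quantum determinant `ad - q bc` in the free algebra. -/
noncomputable def qdet (k : Type*) [Field k] (q : k) : FreeAlgebra k GLqGen :=
  ι k GLqGen.a * ι k GLqGen.d - q • (ι k GLqGen.b * ι k GLqGen.c)

/-- The defining relations of `O(GL_q(2))`: quantum `2×2` relations,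
`ad - da = (q - q⁻¹) bc`, and `D = ad - qbc` central and invertible with inverse `D⁻¹`. -/
inductive GLqRel (k : Type*) [Field k] (q : k) :
    FreeAlgebra k GLqGen → FreeAlgebra k GLqGen → Prop
  | rab : GLqRel k q (ι k GLqGen.a * ι k GLqGen.b) (q • (ι k GLqGen.b * ι k GLqGen.a))
  | rac : GLqRel k q (ι k GLqGen.a * ι k GLqGen.c) (q • (ι k GLqGen.c * ι k GLqGen.a))
  | rbc : GLqRel k q (ι k GLqGen.b * ι k GLqGen.c) (ι k GLqGen.c * ι k GLqGen.b)
  | rbd : GLqRel k q (ι k GLqGen.b * ι k GLqGen.d) (q • (ι k GLqGen.d * ι k GLqGen.b))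
  | rcd : GLqRel k q (ι k GLqGen.c * ι k GLqGen.d) (q • (ι k GLqGen.d * ι k GLqGen.c))
  | rda : GLqRel k q (ι k GLqGen.a * ι k GLqGen.d - ι k GLqGen.d * ι k GLqGen.a)
      ((q - q⁻¹) • (ι k GLqGen.b * ι k GLqGen.c))
  | rcentral (g : GLqGen) : GLqRel k q (qdet k q * ι k g) (ι k g * qdet k q)
  | rinv : GLqRel k q (qdet k q * ι k GLqGen.dinv) 1
  | rinv' : GLqRel k q (ι k GLqGen.dinv * qdet k q) 1

/-- The algebra `O(GL_q(2))`. -/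
abbrev OGLq (k : Type*) [Field k] (q : k) : Type _ := RingQuot (GLqRel k q)

/-- The defining relations of `O(SL_q(2))[z^{±1}]`: the quantum `2×2` relations,
`ād̄ - q b̄c̄ = 1 = d̄ā - q⁻¹ b̄c̄`, with `z` a central invertible indeterminate. -/
inductive SLzRel (k : Type*) [Field k] (q : k) :
    FreeAlgebra k SLzGen → FreeAlgebra k SLzGen → Prop
  | rab : SLzRel k q (ι k SLzGen.a * ι k SLzGen.b) (q • (ι k SLzGen.b * ι k SLzGen.a))
  | rac : SLzRel k q (ι k SLzGen.a * ι k SLzGen.c) (q • (ι k SLzGen.c * ι k SLzGen.a))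
  | rbc : SLzRel k q (ι k SLzGen.b * ι k SLzGen.c) (ι k SLzGen.c * ι k SLzGen.b)
  | rbd : SLzRel k q (ι k SLzGen.b * ι k SLzGen.d) (q • (ι k SLzGen.d * ι k SLzGen.b))
  | rcd : SLzRel k q (ι k SLzGen.c * ι k SLzGen.d) (q • (ι k SLzGen.d * ι k SLzGen.c))
  | rdet : SLzRel k q (ι k SLzGen.a * ι k SLzGen.d - q • (ι k SLzGen.b * ι k SLzGen.c)) 1
  | rdet' : SLzRel k q (ι k SLzGen.d * ι k SLzGen.a - q⁻¹ • (ι k SLzGen.b * ι k SLzGen.c)) 1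
  | rzcentral (g : SLzGen) : SLzRel k q (ι k SLzGen.z * ι k g) (ι k g * ι k SLzGen.z)
  | rz : SLzRel k q (ι k SLzGen.z * ι k SLzGen.zinv) 1
  | rz' : SLzRel k q (ι k SLzGen.zinv * ι k SLzGen.z) 1

/-- The Laurent polynomial extension `O(SL_q(2))[z^{±1}]` with central variable `z`. -/
abbrev OSLqz (k : Type*) [Field k] (q : k) : Type _ := RingQuot (SLzRel k q)

section Stmt8Aux

variable {k : Type*} [Field k] (q : k)

private lemma swap_mul {R : Type*} [Semiring R] {a b z w : R} (h : z * b = b * z) :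
    (a * z) * (b * w) = (a * b) * (z * w) := by
  rw [mul_assoc, ← mul_assoc z, h, mul_assoc, ← mul_assoc]

/-! ### Generators of `O(SL_q(2))[z^{±1}]` -/

private noncomputable def SA : OSLqz k q := RingQuot.mkAlgHom k (SLzRel k q) (ι k SLzGen.a)
private noncomputable def SB : OSLqz k q := RingQuot.mkAlgHom k (SLzRel k q) (ι k SLzGen.b)
private noncomputable def SC : OSLqz k q := RingQuot.mkAlgHom k (SLzRel k q) (ι k SLzGen.c)
private noncomputable def SD : OSLqz k q := RingQuot.mkAlgHom k (SLzRel k q) (ι k SLzGen.d)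
private noncomputable def SZ : OSLqz k q := RingQuot.mkAlgHom k (SLzRel k q) (ι k SLzGen.z)
private noncomputable def SZi : OSLqz k q := RingQuot.mkAlgHom k (SLzRel k q) (ι k SLzGen.zinv)

private lemma sAB : SA q * SB q = q • (SB q * SA q) := by
  simpa [SA, SB, map_mul, map_smul] using RingQuot.mkAlgHom_rel k (SLzRel.rab (k := k) (q := q))
private lemma sAC : SA q * SC q = q • (SC q * SA q) := by
  simpa [SA, SC, map_mul, map_smul] using RingQuot.mkAlgHom_rel k (SLzRel.rac (k := k) (q := q))
private lemma sBC : SB q * SC q = SC q * SB q := by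
  simpa [SB, SC, map_mul] using RingQuot.mkAlgHom_rel k (SLzRel.rbc (k := k) (q := q))
private lemma sBD : SB q * SD q = q • (SD q * SB q) := by
  simpa [SB, SD, map_mul, map_smul] using RingQuot.mkAlgHom_rel k (SLzRel.rbd (k := k) (q := q))
private lemma sCD : SC q * SD q = q • (SD q * SC q) := by
  simpa [SC, SD, map_mul, map_smul] using RingQuot.mkAlgHom_rel k (SLzRel.rcd (k := k) (q := q))
private lemma sdet : SA q * SD q - q • (SB q * SC q) = 1 := by
  simpa [SA, SB, SC, SD, map_mul, map_sub, map_smul] using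
    RingQuot.mkAlgHom_rel k (SLzRel.rdet (k := k) (q := q))
private lemma sdet' : SD q * SA q - q⁻¹ • (SB q * SC q) = 1 := by
  simpa [SA, SB, SC, SD, map_mul, map_sub, map_smul] using
    RingQuot.mkAlgHom_rel k (SLzRel.rdet' (k := k) (q := q))
private lemma sZA : SZ q * SA q = SA q * SZ q := by
  simpa [SZ, SA, map_mul] using RingQuot.mkAlgHom_rel k (SLzRel.rzcentral (k := k) (q := q) SLzGen.a)
private lemma sZB : SZ q * SB q = SB q * SZ q := by
  simpa [SZ, SB, map_mul] using RingQuot.mkAlgHom_rel k (SLzRel.rzcentral (k := k) (q := q) SLzGen.b)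
private lemma sZC : SZ q * SC q = SC q * SZ q := by
  simpa [SZ, SC, map_mul] using RingQuot.mkAlgHom_rel k (SLzRel.rzcentral (k := k) (q := q) SLzGen.c)
private lemma sZD : SZ q * SD q = SD q * SZ q := by
  simpa [SZ, SD, map_mul] using RingQuot.mkAlgHom_rel k (SLzRel.rzcentral (k := k) (q := q) SLzGen.d)
private lemma sZZi : SZ q * SZi q = 1 := by
  simpa [SZ, SZi, map_mul] using RingQuot.mkAlgHom_rel k (SLzRel.rz (k := k) (q := q))
private lemma sZiZ : SZi q * SZ q = 1 := by
  simpa [SZ, SZi, map_mul] using RingQuot.mkAlgHom_rel k (SLzRel.rz' (k := k) (q := q))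

private lemma sDAcomm : SA q * SD q - SD q * SA q = (q - q⁻¹) • (SB q * SC q) := by
  have h1 : SA q * SD q = 1 + q • (SB q * SC q) := by
    have := sdet q; rw [sub_eq_iff_eq_add] at this; rw [this, add_comm]
  have h2 : SD q * SA q = 1 + q⁻¹ • (SB q * SC q) := by
    have := sdet' q; rw [sub_eq_iff_eq_add] at this; rw [this, add_comm]
  rw [h1, h2]
  module

/-! ### Generators of `O(GL_q(2))` -/

private noncomputable def GA : OGLq k q := RingQuot.mkAlgHom k (GLqRel k q) (ι k GLqGen.a)
private noncomputable def GB : OGLq k q := RingQuot.mkAlgHom k (GLqRel k q) (ι k GLqGen.b)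
private noncomputable def GC : OGLq k q := RingQuot.mkAlgHom k (GLqRel k q) (ι k GLqGen.c)
private noncomputable def GD : OGLq k q := RingQuot.mkAlgHom k (GLqRel k q) (ι k GLqGen.d)
private noncomputable def GDi : OGLq k q := RingQuot.mkAlgHom k (GLqRel k q) (ι k GLqGen.dinv)
private noncomputable def GDet : OGLq k q := RingQuot.mkAlgHom k (GLqRel k q) (qdet k q)

private lemma gdetEq : GDet q = GA q * GD q - q • (GB q * GC q) := by
  simp [GDet, GA, GB, GC, GD, qdet, map_sub, map_mul, map_smul]

private lemma gAB : GA q * GB q = q • (GB q * GA q) := by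
  simpa [GA, GB, map_mul, map_smul] using RingQuot.mkAlgHom_rel k (GLqRel.rab (k := k) (q := q))
private lemma gAC : GA q * GC q = q • (GC q * GA q) := by
  simpa [GA, GC, map_mul, map_smul] using RingQuot.mkAlgHom_rel k (GLqRel.rac (k := k) (q := q))
private lemma gBC : GB q * GC q = GC q * GB q := by
  simpa [GB, GC, map_mul] using RingQuot.mkAlgHom_rel k (GLqRel.rbc (k := k) (q := q))
private lemma gBD : GB q * GD q = q • (GD q * GB q) := by
  simpa [GB, GD, map_mul, map_smul] using RingQuot.mkAlgHom_rel k (GLqRel.rbd (k := k) (q := q))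
private lemma gCD : GC q * GD q = q • (GD q * GC q) := by
  simpa [GC, GD, map_mul, map_smul] using RingQuot.mkAlgHom_rel k (GLqRel.rcd (k := k) (q := q))
private lemma gDA : GA q * GD q - GD q * GA q = (q - q⁻¹) • (GB q * GC q) := by
  simpa [GA, GB, GC, GD, map_mul, map_sub, map_smul] using
    RingQuot.mkAlgHom_rel k (GLqRel.rda (k := k) (q := q))
private lemma gCentA : GDet q * GA q = GA q * GDet q := by
  simpa [GDet, GA, map_mul] using
    RingQuot.mkAlgHom_rel k (GLqRel.rcentral (k := k) (q := q) GLqGen.a)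
private lemma gCentB : GDet q * GB q = GB q * GDet q := by
  simpa [GDet, GB, map_mul] using
    RingQuot.mkAlgHom_rel k (GLqRel.rcentral (k := k) (q := q) GLqGen.b)
private lemma gCentC : GDet q * GC q = GC q * GDet q := by
  simpa [GDet, GC, map_mul] using
    RingQuot.mkAlgHom_rel k (GLqRel.rcentral (k := k) (q := q) GLqGen.c)
private lemma gCentD : GDet q * GD q = GD q * GDet q := by
  simpa [GDet, GD, map_mul] using
    RingQuot.mkAlgHom_rel k (GLqRel.rcentral (k := k) (q := q) GLqGen.d)
private lemma gInv : GDet q * GDi q = 1 := by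
  simpa [GDet, GDi, map_mul] using RingQuot.mkAlgHom_rel k (GLqRel.rinv (k := k) (q := q))
private lemma gInv' : GDi q * GDet q = 1 := by
  simpa [GDet, GDi, map_mul] using RingQuot.mkAlgHom_rel k (GLqRel.rinv' (k := k) (q := q))

private lemma giComm {X : OGLq k q} (hX : GDet q * X = X * GDet q) :
    GDi q * X = X * GDi q := by
  calc GDi q * X = GDi q * X * (GDet q * GDi q) := by rw [gInv, mul_one]
    _ = GDi q * (X * GDet q) * GDi q := by simp only [mul_assoc]
    _ = GDi q * (GDet q * X) * GDi q := by rw [hX]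
    _ = (GDi q * GDet q) * (X * GDi q) := by simp only [mul_assoc]
    _ = X * GDi q := by rw [gInv', one_mul]

private lemma giA : GDi q * GA q = GA q * GDi q := giComm q (gCentA q)
private lemma giB : GDi q * GB q = GB q * GDi q := giComm q (gCentB q)
private lemma giC : GDi q * GC q = GC q * GDi q := giComm q (gCentC q)
private lemma giD : GDi q * GD q = GD q * GDi q := giComm q (gCentD q)

private lemma gDA2 : GD q * GA q - q⁻¹ • (GB q * GC q) = GDet q := by
  have h : GA q * GD q = (q - q⁻¹) • (GB q * GC q) + GD q * GA q :=
    sub_eq_iff_eq_add.mp (gDA q)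
  rw [gdetEq, h]
  module

/-! ### The forward map `O(GL_q(2)) → O(SL_q(2))[z^{±1}]` -/

private noncomputable def fwdFree : FreeAlgebra k GLqGen →ₐ[k] OSLqz k q :=
  FreeAlgebra.lift k (fun g => match g with
    | GLqGen.a => SA q * SZ q
    | GLqGen.b => SB q * SZ q
    | GLqGen.c => SC q
    | GLqGen.d => SD q
    | GLqGen.dinv => SZi q)

private lemma fwdFree_a : fwdFree q (ι k GLqGen.a) = SA q * SZ q := by
  simp [fwdFree]
private lemma fwdFree_b : fwdFree q (ι k GLqGen.b) = SB q * SZ q := by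
  simp [fwdFree]
private lemma fwdFree_c : fwdFree q (ι k GLqGen.c) = SC q := by simp [fwdFree]
private lemma fwdFree_d : fwdFree q (ι k GLqGen.d) = SD q := by simp [fwdFree]
private lemma fwdFree_dinv : fwdFree q (ι k GLqGen.dinv) = SZi q := by simp [fwdFree]

private lemma fwdFree_qdet : fwdFree q (qdet k q) = SZ q := by
  rw [qdet]
  simp only [map_sub, map_smul, map_mul]
  rw [fwdFree_a, fwdFree_b, fwdFree_c, fwdFree_d]
  rw [mul_assoc, sZD, ← mul_assoc, mul_assoc (SB q), sZC, ← mul_assoc, ← smul_mul_assoc,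
    ← sub_mul, sdet, one_mul]

private lemma fwd_rel : ∀ ⦃x y : FreeAlgebra k GLqGen⦄, GLqRel k q x y →
    fwdFree q x = fwdFree q y := by
  intro x y h
  induction h with
  | rab =>
    rw [map_mul, map_smul, map_mul, fwdFree_a, fwdFree_b]
    rw [swap_mul (sZB q), swap_mul (sZA q), sAB, smul_mul_assoc]
  | rac =>
    rw [map_mul, map_smul, map_mul, fwdFree_a, fwdFree_c]
    rw [mul_assoc, sZC, ← mul_assoc, sAC, smul_mul_assoc, mul_assoc]
  | rbc =>
    rw [map_mul, map_mul, fwdFree_b, fwdFree_c]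
    rw [mul_assoc, sZC, ← mul_assoc, sBC, mul_assoc]
  | rbd =>
    rw [map_mul, map_smul, map_mul, fwdFree_b, fwdFree_d]
    rw [mul_assoc, sZD, ← mul_assoc, sBD, smul_mul_assoc, mul_assoc]
  | rcd =>
    rw [map_mul, map_smul, map_mul, fwdFree_c, fwdFree_d]
    rw [sCD]
  | rda =>
    rw [map_sub, map_mul, map_mul, map_smul, map_mul, fwdFree_a, fwdFree_b, fwdFree_c, fwdFree_d]
    rw [mul_assoc, sZD, ← mul_assoc, ← mul_assoc, ← sub_mul, sDAcomm, mul_assoc (SB q), sZC,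
      ← mul_assoc, smul_mul_assoc]
  | rcentral g =>
    rw [map_mul, map_mul, fwdFree_qdet]
    cases g with
    | a => rw [fwdFree_a, ← mul_assoc, sZA]
    | b => rw [fwdFree_b, ← mul_assoc, sZB]
    | c => rw [fwdFree_c, sZC]
    | d => rw [fwdFree_d, sZD]
    | dinv => rw [fwdFree_dinv, sZZi, sZiZ]
  | rinv =>
    rw [map_mul, map_one, fwdFree_qdet, fwdFree_dinv, sZZi]
  | rinv' =>
    rw [map_mul, map_one, fwdFree_qdet, fwdFree_dinv, sZiZ]

private noncomputable def fwd : OGLq k q →ₐ[k] OSLqz k q :=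
  RingQuot.liftAlgHom k ⟨fwdFree q, fwd_rel q⟩

private lemma fwd_mk (x : FreeAlgebra k GLqGen) :
    fwd q (RingQuot.mkAlgHom k (GLqRel k q) x) = fwdFree q x :=
  RingQuot.liftAlgHom_mkAlgHom_apply k (fwdFree q) (fwd_rel q) x

/-! ### The backward map -/

private noncomputable def bwdFree : FreeAlgebra k SLzGen →ₐ[k] OGLq k q :=
  FreeAlgebra.lift k (fun g => match g with
    | SLzGen.a => GA q * GDi q
    | SLzGen.b => GB q * GDi q
    | SLzGen.c => GC q
    | SLzGen.d => GD q
    | SLzGen.z => GDet q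
    | SLzGen.zinv => GDi q)

private lemma bwdFree_a : bwdFree q (ι k SLzGen.a) = GA q * GDi q := by simp [bwdFree]
private lemma bwdFree_b : bwdFree q (ι k SLzGen.b) = GB q * GDi q := by simp [bwdFree]
private lemma bwdFree_c : bwdFree q (ι k SLzGen.c) = GC q := by simp [bwdFree]
private lemma bwdFree_d : bwdFree q (ι k SLzGen.d) = GD q := by simp [bwdFree]
private lemma bwdFree_z : bwdFree q (ι k SLzGen.z) = GDet q := by simp [bwdFree]
private lemma bwdFree_zinv : bwdFree q (ι k SLzGen.zinv) = GDi q := by simp [bwdFree]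

private lemma bwd_rel : ∀ ⦃x y : FreeAlgebra k SLzGen⦄, SLzRel k q x y →
    bwdFree q x = bwdFree q y := by
  intro x y h
  induction h with
  | rab =>
    rw [map_mul, map_smul, map_mul, bwdFree_a, bwdFree_b]
    rw [swap_mul (giB q), swap_mul (giA q), gAB, smul_mul_assoc]
  | rac =>
    rw [map_mul, map_smul, map_mul, bwdFree_a, bwdFree_c]
    rw [mul_assoc, giC, ← mul_assoc, gAC, smul_mul_assoc, mul_assoc]
  | rbc =>
    rw [map_mul, map_mul, bwdFree_b, bwdFree_c]
    rw [mul_assoc, giC, ← mul_assoc, gBC, mul_assoc]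
  | rbd =>
    rw [map_mul, map_smul, map_mul, bwdFree_b, bwdFree_d]
    rw [mul_assoc, giD, ← mul_assoc, gBD, smul_mul_assoc, mul_assoc]
  | rcd =>
    rw [map_mul, map_smul, map_mul, bwdFree_c, bwdFree_d, gCD]
  | rdet =>
    rw [map_sub, map_one, map_smul, map_mul, map_mul, bwdFree_a, bwdFree_b, bwdFree_c, bwdFree_d]
    rw [mul_assoc, giD, ← mul_assoc, mul_assoc (GB q), giC, ← mul_assoc, ← smul_mul_assoc,
      ← sub_mul, ← gdetEq, gInv]
  | rdet' =>
    rw [map_sub, map_one, map_smul, map_mul, map_mul, bwdFree_a, bwdFree_b, bwdFree_c, bwdFree_d]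
    rw [← mul_assoc, mul_assoc (GB q), giC, ← mul_assoc, ← smul_mul_assoc, ← sub_mul, gDA2, gInv]
  | rzcentral g =>
    rw [map_mul, map_mul, bwdFree_z]
    cases g with
    | a => rw [bwdFree_a, ← mul_assoc, gCentA, mul_assoc, mul_assoc, gInv, gInv']
    | b => rw [bwdFree_b, ← mul_assoc, gCentB, mul_assoc, mul_assoc, gInv, gInv']
    | c => rw [bwdFree_c, gCentC]
    | d => rw [bwdFree_d, gCentD]
    | z => rw [bwdFree_z]
    | zinv => rw [bwdFree_zinv, gInv, gInv']
  | rz => rw [map_mul, map_one, bwdFree_z, bwdFree_zinv, gInv]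
  | rz' => rw [map_mul, map_one, bwdFree_z, bwdFree_zinv, gInv']

private noncomputable def bwd : OSLqz k q →ₐ[k] OGLq k q :=
  RingQuot.liftAlgHom k ⟨bwdFree q, bwd_rel q⟩

private lemma bwd_mk (x : FreeAlgebra k SLzGen) :
    bwd q (RingQuot.mkAlgHom k (SLzRel k q) x) = bwdFree q x :=
  RingQuot.liftAlgHom_mkAlgHom_apply k (bwdFree q) (bwd_rel q) x

/-! ### Composites -/

private lemma fwd_bwd : (fwd q).comp (bwd q) = AlgHom.id k (OSLqz k q) := by
  apply RingQuot.ringQuot_ext'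
  apply FreeAlgebra.hom_ext
  funext g
  cases g with
  | a =>
    show fwd q (bwd q (RingQuot.mkAlgHom k (SLzRel k q) (ι k SLzGen.a))) = _
    rw [bwd_mk, bwdFree_a, map_mul]
    show fwd q (RingQuot.mkAlgHom k (GLqRel k q) (ι k GLqGen.a)) *
        fwd q (RingQuot.mkAlgHom k (GLqRel k q) (ι k GLqGen.dinv)) = _
    rw [fwd_mk, fwd_mk, fwdFree_a, fwdFree_dinv, mul_assoc, sZZi, mul_one]
    rfl
  | b =>
    show fwd q (bwd q (RingQuot.mkAlgHom k (SLzRel k q) (ι k SLzGen.b))) = _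
    rw [bwd_mk, bwdFree_b, map_mul]
    show fwd q (RingQuot.mkAlgHom k (GLqRel k q) (ι k GLqGen.b)) *
        fwd q (RingQuot.mkAlgHom k (GLqRel k q) (ι k GLqGen.dinv)) = _
    rw [fwd_mk, fwd_mk, fwdFree_b, fwdFree_dinv, mul_assoc, sZZi, mul_one]
    rfl
  | c =>
    show fwd q (bwd q (RingQuot.mkAlgHom k (SLzRel k q) (ι k SLzGen.c))) = _
    rw [bwd_mk, bwdFree_c]
    show fwd q (RingQuot.mkAlgHom k (GLqRel k q) (ι k GLqGen.c)) = _
    rw [fwd_mk, fwdFree_c]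
    rfl
  | d =>
    show fwd q (bwd q (RingQuot.mkAlgHom k (SLzRel k q) (ι k SLzGen.d))) = _
    rw [bwd_mk, bwdFree_d]
    show fwd q (RingQuot.mkAlgHom k (GLqRel k q) (ι k GLqGen.d)) = _
    rw [fwd_mk, fwdFree_d]
    rfl
  | z =>
    show fwd q (bwd q (RingQuot.mkAlgHom k (SLzRel k q) (ι k SLzGen.z))) = _
    rw [bwd_mk, bwdFree_z]
    show fwd q (RingQuot.mkAlgHom k (GLqRel k q) (qdet k q)) = _
    rw [fwd_mk, fwdFree_qdet]
    rfl
  | zinv =>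
    show fwd q (bwd q (RingQuot.mkAlgHom k (SLzRel k q) (ι k SLzGen.zinv))) = _
    rw [bwd_mk, bwdFree_zinv]
    show fwd q (RingQuot.mkAlgHom k (GLqRel k q) (ι k GLqGen.dinv)) = _
    rw [fwd_mk, fwdFree_dinv]
    rfl

private lemma bwd_fwd : (bwd q).comp (fwd q) = AlgHom.id k (OGLq k q) := by
  apply RingQuot.ringQuot_ext'
  apply FreeAlgebra.hom_ext
  funext g
  cases g with
  | a =>
    show bwd q (fwd q (RingQuot.mkAlgHom k (GLqRel k q) (ι k GLqGen.a))) = _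
    rw [fwd_mk, fwdFree_a, map_mul]
    show bwd q (RingQuot.mkAlgHom k (SLzRel k q) (ι k SLzGen.a)) *
        bwd q (RingQuot.mkAlgHom k (SLzRel k q) (ι k SLzGen.z)) = _
    rw [bwd_mk, bwd_mk, bwdFree_a, bwdFree_z, mul_assoc, gInv', mul_one]
    rfl
  | b =>
    show bwd q (fwd q (RingQuot.mkAlgHom k (GLqRel k q) (ι k GLqGen.b))) = _
    rw [fwd_mk, fwdFree_b, map_mul]
    show bwd q (RingQuot.mkAlgHom k (SLzRel k q) (ι k SLzGen.b)) *
        bwd q (RingQuot.mkAlgHom k (SLzRel k q) (ι k SLzGen.z)) = _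
    rw [bwd_mk, bwd_mk, bwdFree_b, bwdFree_z, mul_assoc, gInv', mul_one]
    rfl
  | c =>
    show bwd q (fwd q (RingQuot.mkAlgHom k (GLqRel k q) (ι k GLqGen.c))) = _
    rw [fwd_mk, fwdFree_c]
    show bwd q (RingQuot.mkAlgHom k (SLzRel k q) (ι k SLzGen.c)) = _
    rw [bwd_mk, bwdFree_c]
    rfl
  | d =>
    show bwd q (fwd q (RingQuot.mkAlgHom k (GLqRel k q) (ι k GLqGen.d))) = _
    rw [fwd_mk, fwdFree_d]
    show bwd q (RingQuot.mkAlgHom k (SLzRel k q) (ι k SLzGen.d)) = _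
    rw [bwd_mk, bwdFree_d]
    rfl
  | dinv =>
    show bwd q (fwd q (RingQuot.mkAlgHom k (GLqRel k q) (ι k GLqGen.dinv))) = _
    rw [fwd_mk, fwdFree_dinv]
    show bwd q (RingQuot.mkAlgHom k (SLzRel k q) (ι k SLzGen.zinv)) = _
    rw [bwd_mk, bwdFree_zinv]
    rfl

end Stmt8Aux


/-- There is an algebra isomorphism `O(GL_q(2)) ≅ O(SL_q(2))[z, z⁻¹]` sending
`a ↦ ā z`, `b ↦ b̄ z`, `c ↦ c̄`, `d ↦ d̄`. -/
theorem stmt8 {k : Type*} [Field k] (q : k) (hq : q ≠ 0) :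
    ∃ e : OGLq k q ≃ₐ[k] OSLqz k q,
      e (RingQuot.mkAlgHom k (GLqRel k q) (ι k GLqGen.a))
        = RingQuot.mkAlgHom k (SLzRel k q) (ι k SLzGen.a * ι k SLzGen.z) ∧
      e (RingQuot.mkAlgHom k (GLqRel k q) (ι k GLqGen.b))
        = RingQuot.mkAlgHom k (SLzRel k q) (ι k SLzGen.b * ι k SLzGen.z) ∧
      e (RingQuot.mkAlgHom k (GLqRel k q) (ι k GLqGen.c))
        = RingQuot.mkAlgHom k (SLzRel k q) (ι k SLzGen.c) ∧
      e (RingQuot.mkAlgHom k (GLqRel k q) (ι k GLqGen.d))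
        = RingQuot.mkAlgHom k (SLzRel k q) (ι k SLzGen.d) := by
  refine ⟨AlgEquiv.ofAlgHom (fwd q) (bwd q) (fwd_bwd q) (bwd_fwd q), ?_, ?_, ?_, ?_⟩
  · show fwd q (RingQuot.mkAlgHom k (GLqRel k q) (ι k GLqGen.a)) = _
    rw [fwd_mk, fwdFree_a, map_mul]
    rfl
  · show fwd q (RingQuot.mkAlgHom k (GLqRel k q) (ι k GLqGen.b)) = _
    rw [fwd_mk, fwdFree_b, map_mul]
    rfl
  · show fwd q (RingQuot.mkAlgHom k (GLqRel k q) (ι k GLqGen.c)) = _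
    rw [fwd_mk, fwdFree_c]
    rfl
  · show fwd q (RingQuot.mkAlgHom k (GLqRel k q) (ι k GLqGen.d)) = _
    rw [fwd_mk, fwdFree_d]
    rfl
end
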